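/- Let (G,T) be a bipartite graft with color classes A and B, let F be a minimum join of (G,T), and let X ⊆ A be a maximal bipartitic extreme set. Let C' ⊆ C_X, and let G' = G − C' and T' = T ∖ C'. Then a set of edges is a minimum join of (G',T') if and only if it is a minimum join of (G,T). -/

import Mathlib

open scoped Classical

variable {V : Type*}

/-- The `F`-weight of a walk: number of edges outside `F` minus number of edges in `F`. -/
noncomputable def walkWeight {G : SimpleGraph V} (F : Set (Sym2 V)) {x y : V}
    (p : G.Walk x y) : ℤ :=
  ((p.edges.filter fun e => e ∉ F).length : ℤ) -
    ((p.edges.filter fun e => e ∈ F).length : ℤ)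

/-- The `F`-distance between `x` and `y`: the minimum `F`-weight of a path between them. -/
noncomputable def distF (G : SimpleGraph V) (F : Set (Sym2 V)) (x y : V) : ℤ :=
  sInf {w : ℤ | ∃ p : G.Walk x y, p.IsPath ∧ walkWeight F p = w}

/-- `F` is a join of the graft `(G, T)`. -/
def IsJoin (G : SimpleGraph V) (T : Set V) (F : Set (Sym2 V)) : Prop :=
  F ⊆ G.edgeSet ∧ ∀ v : V, v ∈ T ↔ Odd {e ∈ F | v ∈ e}.ncard

/-- `F` is a minimum join of the graft `(G, T)`. -/
def IsMinJoin (G : SimpleGraph V) (T : Set V) (F : Set (Sym2 V)) : Prop :=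
  IsJoin G T F ∧ ∀ F' : Set (Sym2 V), IsJoin G T F' → F.ncard ≤ F'.ncard

/-- `(G, T)` is a graft: every connected component contains an even number of vertices of `T`. -/
def IsGraft (G : SimpleGraph V) (T : Set V) : Prop :=
  ∀ v : V, Even {u | u ∈ T ∧ G.Reachable v u}.ncard

/-- `X` is an extreme set: `d_F(x, y) ≥ 0` for all `x, y ∈ X`. -/
def IsExtremeSet (G : SimpleGraph V) (F : Set (Sym2 V)) (X : Set V) : Prop :=
  ∀ x ∈ X, ∀ y ∈ X, 0 ≤ distF G F x y

/-- `G` is bipartite with vertex set `Vset` and color classes `A`, `B`. -/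
def IsBipartitionOn (G : SimpleGraph V) (Vset A B : Set V) : Prop :=
  A ∪ B = Vset ∧ Disjoint A B ∧
    ∀ v w : V, G.Adj v w → (v ∈ A ∧ w ∈ B) ∨ (v ∈ B ∧ w ∈ A)

/-- `X` is a maximal bipartitic extreme set with respect to color classes `A`, `B`. -/
def MaxBipExtreme (G : SimpleGraph V) (F : Set (Sym2 V)) (A B X : Set V) : Prop :=
  IsExtremeSet G F X ∧ (X ⊆ A ∨ X ⊆ B) ∧
    ∀ X' : Set V, IsExtremeSet G F X' → (X' ⊆ A ∨ X' ⊆ B) → X ⊆ X' → X' = X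

/-- `D_X`: the vertices of `Vset ∖ X` at negative `F`-distance from `X`. -/
def Dset (G : SimpleGraph V) (F : Set (Sym2 V)) (Vset X : Set V) : Set V :=
  {y | y ∈ Vset ∧ y ∉ X ∧ ∃ x ∈ X, distF G F x y < 0}

/-- `C_X = Vset ∖ X ∖ D_X`. -/
def Cset (G : SimpleGraph V) (F : Set (Sym2 V)) (Vset X : Set V) : Set V :=
  (Vset \ X) \ Dset G F Vset X

/-- `min_{x ∈ X} d_F(x, y)`. -/
noncomputable def minDistX (G : SimpleGraph V) (F : Set (Sym2 V)) (X : Set V) (y : V) : ℤ :=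
  sInf {d : ℤ | ∃ x ∈ X, distF G F x y = d}

/-- The graph `G − S` obtained by deleting the vertices of `S`. -/
def gDelete (G : SimpleGraph V) (S : Set V) : SimpleGraph V where
  Adj v w := G.Adj v w ∧ v ∉ S ∧ w ∉ S
  symm := ⟨fun v w ⟨h, hv, hw⟩ => ⟨h.symm, hw, hv⟩⟩
  loopless := ⟨fun v h => G.loopless.irrefl v h.1⟩

/-- The subgraph of `G` induced by `S`. -/
def gRestrict (G : SimpleGraph V) (S : Set V) : SimpleGraph V where
  Adj v w := G.Adj v w ∧ v ∈ S ∧ w ∈ S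
  symm := ⟨fun v w ⟨h, hv, hw⟩ => ⟨h.symm, hw, hv⟩⟩
  loopless := ⟨fun v h => G.loopless.irrefl v h.1⟩

/-- `C` is (the vertex set of) a connected component of `G − X`. -/
def IsCompOf (G : SimpleGraph V) (X C : Set V) : Prop :=
  ∃ v, v ∉ X ∧ C = {u | (gDelete G X).Reachable v u}

/-- `δ_G(C)`: the edges of `G` with exactly one end in `C`. -/
def edgeBoundary (G : SimpleGraph V) (C : Set V) : Set (Sym2 V) :=
  {e | e ∈ G.edgeSet ∧ ∃ u v : V, e = s(u, v) ∧ u ∈ C ∧ v ∉ C}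

/-- `X` is an `F`-combic set of the graft `(G, T)`. -/
def IsCombic (G : SimpleGraph V) (T : Set V) (F : Set (Sym2 V)) (X : Set V) : Prop :=
  (∀ u v : V, s(u, v) ∈ F → ¬(u ∈ X ∧ v ∈ X)) ∧
  (∀ C : Set V, IsCompOf G X C → Odd (C ∩ T).ncard →
      (edgeBoundary G C ∩ F).ncard = 1) ∧
  (∀ C : Set V, IsCompOf G X C → Even (C ∩ T).ncard →
      edgeBoundary G C ∩ F = ∅)

/-- The rootlization of `G` by the mount `X`, root `r` and attachment `s`. -/
def rootlize (G : SimpleGraph V) (X : Set V) (r s : V) : SimpleGraph V :=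
  SimpleGraph.fromRel fun v w => G.Adj v w ∨ (v = r ∧ w = s) ∨ (v = s ∧ w ∈ X)

/-- The initial component of `r`: the connected component of `r` in the subgraph
induced by the vertices at nonpositive `F`-distance from `r`. -/
def initComp (G : SimpleGraph V) (F : Set (Sym2 V)) (r : V) : Set V :=
  {x | (gRestrict G {y | distF G F r y ≤ 0}).Reachable r x}

/-!
Fix the minimum join `F`. For every edge set `Z` with all degrees even, `F ∆ Z` is again a join,
so `Z` has nonnegative `F`-weight. If `ab` is an edge of another minimum join `F'`, then
`Z = F ∆ (F' ∖ {ab})` has odd degree exactly at `a` and `b` and `F`-weight `-1`; it contains an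
`a`–`b` path whose complement in `Z` has even degrees, so `d_F(a, b) ≤ -1`.

By maximality of `X`, the set `C_X` avoids `A`. A neighbour `a` of `b ∈ C_X` then lies in `X`:
otherwise `a ∈ D_X`, and since `x, a ∈ A` the weight `d_F(x, a) < 0` is even, so
`d_F(x, a) ≤ -2`; extending a shortest path by the edge `ab` (or, if it passes through `b`, using
the nonnegativity of the cycle it closes) gives `d_F(x, b) < 0`. Hence no minimum join has an
edge at `C_X`; in particular `C_X ∩ T = ∅`, and deleting `C'` preserves the minimum joins.
-/

open SimpleGraph
open scoped symmDiff

theorem Set.ncard_symmDiff_add_two_mul_ncard_inter {α : Type*} {s t : Set α}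
    (hs : s.Finite) (ht : t.Finite) :
    (s ∆ t).ncard + 2 * (s ∩ t).ncard = s.ncard + t.ncard := by
  have hdiff := Set.ncard_sdiff_add_ncard_of_subset
    (show s ∩ t ⊆ s ∪ t from Set.inter_subset_left.trans Set.subset_union_left) (hs.union ht)
  rw [← show s ∆ t = (s ∪ t) \ (s ∩ t) from symmDiff_eq_sup_sdiff_inf s t] at hdiff
  have := Set.ncard_inter_add_ncard_union s t hs ht
  omega

theorem List.ncard_setOf_mem_and {α : Type*} {l : List α} (hl : l.Nodup) (q : α → Prop) :
    {x | x ∈ l ∧ q x}.ncard = l.countP (fun x => q x) := by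
  have : {x | x ∈ l ∧ q x} = ↑(l.filter (fun x => q x)).toFinset := by
    ext x; simp
  rw [this, Set.ncard_coe_finset, List.toFinset_card_of_nodup (hl.filter _),
    List.countP_eq_length_filter]

section EdgeSets

noncomputable def edgeDegree (S : Set (Sym2 V)) (v : V) : ℕ := {e ∈ S | v ∈ e}.ncard

noncomputable def edgeWeight (F S : Set (Sym2 V)) : ℤ :=
  ((S \ F).ncard : ℤ) - ((S ∩ F).ncard : ℤ)

theorem odd_edgeDegree_singleton (e : Sym2 V) (v : V) :
    Odd (edgeDegree {e} v) ↔ v ∈ e := by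
  by_cases hv : v ∈ e
  · have : {f ∈ ({e} : Set (Sym2 V)) | v ∈ f} = {e} := by ext f; simp_all
    rw [edgeDegree, this, Set.ncard_singleton]
    simpa using hv
  · have : {f ∈ ({e} : Set (Sym2 V)) | v ∈ f} = ∅ := by ext f; simp_all
    rw [edgeDegree, this, Set.ncard_empty]
    simpa using hv

variable [Fintype V]

theorem odd_edgeDegree_symmDiff (S S' : Set (Sym2 V)) (v : V) :
    Odd (edgeDegree (S ∆ S') v) ↔ ¬(Odd (edgeDegree S v) ↔ Odd (edgeDegree S' v)) := by
  have hsep : {e ∈ S ∆ S' | v ∈ e} = {e ∈ S | v ∈ e} ∆ {e ∈ S' | v ∈ e} := by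
    ext e; simp only [Set.mem_symmDiff, Set.mem_ofPred_eq]; tauto
  have := Set.ncard_symmDiff_add_two_mul_ncard_inter
    (Set.toFinite {e ∈ S | v ∈ e}) (Set.toFinite {e ∈ S' | v ∈ e})
  rw [← hsep] at this
  simp only [edgeDegree, Nat.odd_iff]
  omega

theorem edgeDegree_sdiff_add {S P : Set (Sym2 V)} (h : P ⊆ S) (v : V) :
    edgeDegree (S \ P) v + edgeDegree P v = edgeDegree S v := by
  have hsep : {e ∈ S \ P | v ∈ e} = {e ∈ S | v ∈ e} \ {e ∈ P | v ∈ e} := by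
    ext e; simp only [Set.mem_sdiff, Set.mem_ofPred_eq]; tauto
  rw [edgeDegree, hsep]
  exact Set.ncard_sdiff_add_ncard_of_subset fun e he => ⟨h he.1, he.2⟩

theorem edgeWeight_sdiff_add {F S P : Set (Sym2 V)} (h : P ⊆ S) :
    edgeWeight F (S \ P) + edgeWeight F P = edgeWeight F S := by
  have h₁ : (S \ F) \ (P \ F) = (S \ P) \ F := by ext; simp only [Set.mem_sdiff]; tauto
  have h₂ : (S ∩ F) \ (P ∩ F) = (S \ P) ∩ F := by
    ext; simp only [Set.mem_sdiff, Set.mem_inter_iff]; tauto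
  have e₁ := Set.ncard_sdiff_add_ncard_of_subset (Set.sdiff_subset_sdiff_left (t := F) h)
  have e₂ := Set.ncard_sdiff_add_ncard_of_subset (Set.inter_subset_inter_left F h)
  rw [h₁] at e₁
  rw [h₂] at e₂
  unfold edgeWeight
  omega

theorem ncard_symmDiff_eq_add_edgeWeight (F S : Set (Sym2 V)) :
    ((F ∆ S).ncard : ℤ) = F.ncard + edgeWeight F S := by
  have h₁ := Set.ncard_symmDiff_add_two_mul_ncard_inter (Set.toFinite F) (Set.toFinite S)
  have h₂ := Set.ncard_inter_add_ncard_sdiff_eq_ncard S F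
  rw [Set.inter_comm] at h₁
  unfold edgeWeight
  omega

end EdgeSets

section Walks

variable {G : SimpleGraph V} {F : Set (Sym2 V)} {u v w : V}

theorem walkWeight_eq_edgeWeight {p : G.Walk u v} (hp : p.IsTrail) :
    walkWeight F p = edgeWeight F p.edgeSet := by
  have h₁ : p.edgeSet \ F = {e | e ∈ p.edges ∧ e ∉ F} := rfl
  have h₂ : p.edgeSet ∩ F = {e | e ∈ p.edges ∧ e ∈ F} := rfl
  rw [walkWeight, edgeWeight, h₁, h₂, List.ncard_setOf_mem_and hp.edges_nodup,
    List.ncard_setOf_mem_and hp.edges_nodup, List.countP_eq_length_filter,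
    List.countP_eq_length_filter]
  congr!

theorem odd_edgeDegree_edgeSet {p : G.Walk u v} (hp : p.IsTrail) (x : V) :
    Odd (edgeDegree p.edgeSet x) ↔ u ≠ v ∧ (x = u ∨ x = v) := by
  have : edgeDegree p.edgeSet x = p.edges.countP fun e => x ∈ e := by
    show {e | e ∈ p.edges ∧ x ∈ e}.ncard = _
    convert List.ncard_setOf_mem_and hp.edges_nodup (x ∈ ·)
  rw [this, ← Nat.not_even_iff_odd, hp.even_countP_edges_iff]
  tauto

theorem walkWeight_append (F : Set (Sym2 V)) (p : G.Walk u v) (q : G.Walk v w) :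
    walkWeight F (p.append q) = walkWeight F p + walkWeight F q := by
  simp only [walkWeight, Walk.edges_append, List.filter_append, List.length_append]
  push_cast
  ring

theorem walkWeight_nil (F : Set (Sym2 V)) : walkWeight F (.nil : G.Walk u u) = 0 := rfl

theorem walkWeight_cons (F : Set (Sym2 V)) (h : G.Adj u v) (p : G.Walk v w) :
    walkWeight F (.cons h p) = (if s(u, v) ∈ F then -1 else 1) + walkWeight F p := by
  by_cases hF : s(u, v) ∈ F <;>
    simp [walkWeight, hF] <;> ring

theorem walkWeight_reverse (F : Set (Sym2 V)) (p : G.Walk u v) :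
    walkWeight F p.reverse = walkWeight F p := by
  simp [walkWeight, Walk.edges_reverse, List.filter_reverse]

theorem neg_length_le_walkWeight (F : Set (Sym2 V)) (p : G.Walk u v) :
    -(p.length : ℤ) ≤ walkWeight F p := by
  have : (p.edges.filter fun e => e ∈ F).length ≤ p.length :=
    p.length_edges ▸ List.length_filter_le _ _
  unfold walkWeight
  omega

theorem even_walkWeight_iff (F : Set (Sym2 V)) (p : G.Walk u v) :
    Even (walkWeight F p) ↔ Even p.length := by
  have : (p.edges.filter fun e => e ∉ F).length + (p.edges.filter fun e => e ∈ F).length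
      = p.length := by
    rw [← p.length_edges, ← List.countP_eq_length_filter, ← List.countP_eq_length_filter,
      add_comm, p.edges.length_eq_countP_add_countP (fun e => decide (e ∈ F))]
    simp
  rw [walkWeight, Int.even_sub, ← this, Nat.even_add]
  norm_cast

end Walks

section Distance

variable {G : SimpleGraph V} {F : Set (Sym2 V)} {x y : V}

theorem distF_self (x : V) : distF G F x x = 0 := by
  have : {w : ℤ | ∃ p : G.Walk x x, p.IsPath ∧ walkWeight F p = w} = {0} := by
    ext w
    constructor
    · rintro ⟨p, hp, rfl⟩
      rw [Walk.eq_nil_iff_nil.mpr (Walk.isPath_iff_nil.mp hp)]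
      rfl
    · rintro rfl
      exact ⟨.nil, .nil, rfl⟩
  rw [distF, this, csInf_singleton]

theorem distF_comm (x y : V) : distF G F x y = distF G F y x := by
  have key : ∀ a b : V, {w : ℤ | ∃ p : G.Walk a b, p.IsPath ∧ walkWeight F p = w} ⊆
      {w : ℤ | ∃ p : G.Walk b a, p.IsPath ∧ walkWeight F p = w} := by
    rintro a b _ ⟨p, hp, rfl⟩
    exact ⟨p.reverse, hp.reverse, walkWeight_reverse F p⟩
  rw [distF, distF, (key x y).antisymm (key y x)]

variable [Fintype V]

theorem bddBelow_pathWeights (x y : V) :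
    BddBelow {w : ℤ | ∃ p : G.Walk x y, p.IsPath ∧ walkWeight F p = w} := by
  refine ⟨-(Fintype.card V : ℤ), ?_⟩
  rintro _ ⟨p, hp, rfl⟩
  have := hp.length_lt
  have := neg_length_le_walkWeight F p
  omega

theorem distF_le_walkWeight {p : G.Walk x y} (hp : p.IsPath) : distF G F x y ≤ walkWeight F p :=
  csInf_le (bddBelow_pathWeights x y) ⟨p, hp, rfl⟩

theorem exists_isPath_walkWeight_eq_distF (h : distF G F x y < 0) :
    ∃ p : G.Walk x y, p.IsPath ∧ walkWeight F p = distF G F x y := by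
  by_cases hne : {w : ℤ | ∃ p : G.Walk x y, p.IsPath ∧ walkWeight F p = w}.Nonempty
  · exact Int.csInf_mem hne (bddBelow_pathWeights x y)
  · rw [distF, Set.not_nonempty_iff_eq_empty.mp hne, Int.csInf_empty] at h
    exact absurd h (lt_irrefl 0)

end Distance

section OddVertices

variable [Fintype V] {G : SimpleGraph V} {S : Set (Sym2 V)} {a b : V}

theorem degree_fromEdgeSet (hS : Disjoint S Sym2.diagSet) (v : V) :
    (fromEdgeSet S).degree v = edgeDegree S v := by
  rw [← card_incidenceSet_eq_degree, ← Nat.card_eq_fintype_card, Nat.card_coe_set_eq,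
    incidenceSet, edgeSet_fromEdgeSet, sdiff_eq_left.mpr hS, edgeDegree]

theorem even_ncard_odd_edgeDegree (hS : Disjoint S Sym2.diagSet) :
    Even {v | Odd (edgeDegree S v)}.ncard := by
  have := (fromEdgeSet S).even_card_odd_degree_vertices
  simp only [degree_fromEdgeSet hS] at this
  rwa [← Set.ncard_coe_finset, Finset.coe_filter_univ] at this

theorem reachable_fromEdgeSet_of_odd_edgeDegree_iff (hS : Disjoint S Sym2.diagSet)
    (hodd : ∀ v, Odd (edgeDegree S v) ↔ v = a ∨ v = b) : (fromEdgeSet S).Reachable a b := by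
  by_contra hab
  set K := {v | (fromEdgeSet S).Reachable a v}
  set SK := {e ∈ S | ∃ w ∈ e, w ∈ K}
  have hodd_SK : {v | Odd (edgeDegree SK v)} = {a} := by
    ext v
    by_cases hv : v ∈ K
    · have : {e ∈ SK | v ∈ e} = {e ∈ S | v ∈ e} := by
        ext e; exact ⟨fun h => ⟨h.1.1, h.2⟩, fun h => ⟨⟨h.1, v, h.2, hv⟩, h.2⟩⟩
      simp only [Set.mem_ofPred_eq, Set.mem_singleton_iff, edgeDegree, this]
      rw [← edgeDegree, hodd]
      exact ⟨fun h => h.resolve_right fun hvb => hab (hvb ▸ hv), Or.inl⟩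
    · have : {e ∈ SK | v ∈ e} = ∅ := by
        refine Set.eq_empty_of_forall_notMem fun e ⟨⟨heS, w, hwe, hw⟩, hve⟩ => hv ?_
        have hwv : w ≠ v := fun h => hv (h ▸ hw)
        rw [(Sym2.mem_and_mem_iff hwv).mp ⟨hwe, hve⟩] at heS
        exact hw.trans (show (fromEdgeSet S).Adj w v from ⟨heS, hwv⟩).reachable
      simp only [Set.mem_ofPred_eq, Set.mem_singleton_iff, edgeDegree, this, Set.ncard_empty]
      exact ⟨fun h => absurd h (by decide), fun h => absurd (h ▸ Reachable.refl a) hv⟩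
  have := even_ncard_odd_edgeDegree (S := SK) (hS.mono_left (Set.sep_subset S _))
  rw [hodd_SK, Set.ncard_singleton] at this
  exact Nat.not_even_one this

theorem exists_isPath_edgeSet_subset_of_odd_edgeDegree_iff (hS : S ⊆ G.edgeSet)
    (hodd : ∀ v, Odd (edgeDegree S v) ↔ v = a ∨ v = b) :
    ∃ p : G.Walk a b, p.IsPath ∧ p.edgeSet ⊆ S := by
  have hdiag : Disjoint S Sym2.diagSet :=
    Set.subset_compl_iff_disjoint_right.mp (hS.trans G.edgeSet_subset_compl_diagSet)
  obtain ⟨q⟩ := reachable_fromEdgeSet_of_odd_edgeDegree_iff hdiag hodd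
  have hqS : ∀ e ∈ q.toPath.val.edges, e ∈ S := fun e he => by
    have := q.toPath.val.edges_subset_edgeSet he
    rw [edgeSet_fromEdgeSet, sdiff_eq_left.mpr hdiag] at this
    exact this
  refine ⟨q.toPath.val.transfer G fun e he => hS (hqS e he), q.toPath.2.transfer _, ?_⟩
  intro e he
  rw [Walk.edgeSet, Set.mem_ofPred_eq, Walk.edges_transfer] at he
  exact hqS e he

end OddVertices

section Joins

variable {G : SimpleGraph V} {T : Set V} {F F' Z : Set (Sym2 V)} {a b x : V}

theorem IsJoin.mem_iff (hF : IsJoin G T F) (v : V) : v ∈ T ↔ Odd (edgeDegree F v) := hF.2 v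

theorem IsJoin.exists_mem_of_mem (hF : IsJoin G T F) {v : V} (hv : v ∈ T) :
    ∃ e ∈ F, v ∈ e :=
  Set.nonempty_of_ncard_ne_zero ((hF.mem_iff v).mp hv).pos.ne'

theorem IsMinJoin.ncard_eq (hF : IsMinJoin G T F) (hF' : IsMinJoin G T F') :
    F.ncard = F'.ncard :=
  (hF.2 F' hF'.1).antisymm (hF'.2 F hF.1)

variable [Fintype V]

theorem IsJoin.symmDiff (hF : IsJoin G T F) (hZ : Z ⊆ G.edgeSet)
    (hev : ∀ v, Even (edgeDegree Z v)) : IsJoin G T (F ∆ Z) := by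
  refine ⟨Set.symmDiff_subset_union.trans (Set.union_subset hF.1 hZ), fun v => ?_⟩
  rw [hF.mem_iff, ← edgeDegree, odd_edgeDegree_symmDiff,
    ← Nat.not_even_iff_odd (n := edgeDegree Z v)]
  tauto

theorem IsMinJoin.edgeWeight_nonneg (hF : IsMinJoin G T F) (hZ : Z ⊆ G.edgeSet)
    (hev : ∀ v, Even (edgeDegree Z v)) : 0 ≤ edgeWeight F Z := by
  have := hF.2 _ (hF.1.symmDiff hZ hev)
  have := ncard_symmDiff_eq_add_edgeWeight F Z
  omega

theorem IsMinJoin.distF_le_edgeWeight (hF : IsMinJoin G T F) (hZ : Z ⊆ G.edgeSet)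
    (hab : a ≠ b) (hodd : ∀ v, Odd (edgeDegree Z v) ↔ v = a ∨ v = b) :
    distF G F a b ≤ edgeWeight F Z := by
  obtain ⟨p, hp, hpZ⟩ := exists_isPath_edgeSet_subset_of_odd_edgeDegree_iff hZ hodd
  have hrest : ∀ v, Even (edgeDegree (Z \ p.edgeSet) v) := fun v => by
    have hsum := edgeDegree_sdiff_add hpZ v
    have hpar : Odd (edgeDegree p.edgeSet v) ↔ Odd (edgeDegree Z v) := by
      rw [odd_edgeDegree_edgeSet hp.isTrail, hodd, and_iff_right hab]
    rw [Nat.odd_iff, Nat.odd_iff] at hpar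
    rw [Nat.even_iff]
    omega
  calc distF G F a b ≤ walkWeight F p := distF_le_walkWeight hp
    _ = edgeWeight F p.edgeSet := walkWeight_eq_edgeWeight hp.isTrail
    _ ≤ edgeWeight F Z := by
      linarith [edgeWeight_sdiff_add (F := F) hpZ,
        hF.edgeWeight_nonneg (Set.sdiff_subset.trans hZ) hrest]

theorem IsMinJoin.distF_le_neg_one (hF : IsMinJoin G T F) (hF' : IsMinJoin G T F')
    (he : s(a, b) ∈ F') : distF G F a b ≤ -1 := by
  set J := F' \ {s(a, b)} with hJ
  have hsub : {s(a, b)} ⊆ F' := Set.singleton_subset_iff.mpr he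
  have hZ : F ∆ J ⊆ G.edgeSet :=
    Set.symmDiff_subset_union.trans (Set.union_subset hF.1.1 (Set.sdiff_subset.trans hF'.1.1))
  have hodd : ∀ v, Odd (edgeDegree (F ∆ J) v) ↔ v = a ∨ v = b := fun v => by
    rw [odd_edgeDegree_symmDiff, ← hF.1.mem_iff, hF'.1.mem_iff, ← edgeDegree_sdiff_add hsub v,
      Nat.odd_add, ← Nat.not_odd_iff_even, odd_edgeDegree_singleton, Sym2.mem_iff]
    tauto
  have hw : edgeWeight F (F ∆ J) = -1 := by
    have h₁ := ncard_symmDiff_eq_add_edgeWeight F (F ∆ J)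
    rw [symmDiff_symmDiff_cancel_left] at h₁
    have h₂ := Set.ncard_sdiff_add_ncard_of_subset hsub
    rw [Set.ncard_singleton, ← hJ] at h₂
    have h₃ := hF.ncard_eq hF'
    omega
  exact hw ▸ hF.distF_le_edgeWeight hZ (G.ne_of_adj (hF'.1.1 he)) hodd

theorem IsMinJoin.neg_one_le_walkWeight_of_adj (hF : IsMinJoin G T F) {p : G.Walk b a}
    (hp : p.IsPath) (h : G.Adj a b) : -1 ≤ walkWeight F p := by
  by_cases he : s(b, a) ∈ p.edges
  · have := hp.length_eq_one_of_mem_edges he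
    have := neg_length_le_walkWeight F p
    omega
  · have hc : (Walk.cons h p).IsTrail := hp.isTrail.cons h (by rwa [Sym2.eq_swap])
    have hev : ∀ v, Even (edgeDegree (Walk.cons h p).edgeSet v) := fun v => by
      rw [← Nat.not_odd_iff_even, odd_edgeDegree_edgeSet hc]
      simp
    have := hF.edgeWeight_nonneg (Z := (Walk.cons h p).edgeSet)
      (fun _ he => Walk.edges_subset_edgeSet _ he) hev
    rw [← walkWeight_eq_edgeWeight hc, walkWeight_cons] at this
    split_ifs at this <;> omega

theorem IsMinJoin.distF_le_walkWeight_add_one (hF : IsMinJoin G T F) {p : G.Walk x a}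
    (hp : p.IsPath) (h : G.Adj a b) : distF G F x b ≤ walkWeight F p + 1 := by
  by_cases hb : b ∈ p.support
  · have hsplit := walkWeight_append F (p.takeUntil b hb) (p.dropUntil b hb)
    rw [p.take_spec hb] at hsplit
    have := distF_le_walkWeight (F := F) (hp.takeUntil hb)
    have := hF.neg_one_le_walkWeight_of_adj (hp.dropUntil hb) h
    omega
  · have := distF_le_walkWeight (F := F) (hp.concat hb h)
    rw [Walk.concat_eq_append, walkWeight_append, walkWeight_cons, walkWeight_nil] at this
    split_ifs at this <;> omega

end Joins

theorem IsBipartitionOn.even_length {G : SimpleGraph V} {Vset A B : Set V}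
    (hbip : IsBipartitionOn G Vset A B) {u v : V} (p : G.Walk u v) (hu : u ∈ A) (hv : v ∈ A) :
    Even p.length := by
  let c : G.Coloring Bool := Coloring.mk (fun w => decide (w ∈ A)) fun {w w'} h => by
    rcases hbip.2.2 w w' h with ⟨hw, hw'⟩ | ⟨hw, hw'⟩
    · simp [hw, hbip.2.1.notMem_of_mem_right hw']
    · simp [hw', hbip.2.1.notMem_of_mem_right hw]
  have hc : ∀ w, c w = decide (w ∈ A) := fun _ => rfl
  rw [← Nat.not_odd_iff_even, c.odd_length_iff_not_congr, hc, hc]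
  simp [hu, hv]

section ExtremeSets

variable {G : SimpleGraph V} {T A B X : Set V} {F : Set (Sym2 V)} {a b x y : V}

theorem distF_nonneg_of_mem_Cset {Vset : Set V} (hy : y ∈ Cset G F Vset X) (hx : x ∈ X) :
    0 ≤ distF G F x y :=
  not_lt.mp fun h => hy.2 ⟨hy.1.1, hy.1.2, x, hx, h⟩

theorem notMem_of_mem_Cset (hXA : X ⊆ A) (hX : MaxBipExtreme G F A B X)
    (hy : y ∈ Cset G F Set.univ X) : y ∉ A := by
  intro hyA
  have hext : IsExtremeSet G F (insert y X) := by
    rintro u (rfl | hu) v (rfl | hv)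
    · exact (distF_self _).ge
    · exact distF_comm (G := G) _ _ ▸ distF_nonneg_of_mem_Cset hy hv
    · exact distF_nonneg_of_mem_Cset hy hu
    · exact hX.1 u hu v hv
  have := hX.2.2 _ hext (Or.inl (Set.insert_subset hyA hXA)) (Set.subset_insert y X)
  exact hy.1.2 (this ▸ Set.mem_insert y X)

variable [Fintype V]

theorem mem_of_adj_of_mem_Cset (hbip : IsBipartitionOn G Set.univ A B) (hF : IsMinJoin G T F)
    (hXA : X ⊆ A) (hX : MaxBipExtreme G F A B X) (hb : b ∈ Cset G F Set.univ X)
    (h : G.Adj a b) : a ∈ X := by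
  have hbA := notMem_of_mem_Cset hXA hX hb
  have haA : a ∈ A := by
    rcases hbip.2.2 a b h with ⟨ha, -⟩ | ⟨-, hb'⟩
    exacts [ha, absurd hb' hbA]
  by_contra haX
  have haD : a ∈ Dset G F Set.univ X := by
    by_contra haD
    exact notMem_of_mem_Cset hXA hX ⟨⟨trivial, haX⟩, haD⟩ haA
  obtain ⟨-, -, x, hx, hxa⟩ := haD
  obtain ⟨p, hp, hpw⟩ := exists_isPath_walkWeight_eq_distF hxa
  -- `x` and `a` lie on the same side, so `d_F(x, a)` is even, hence at most `-2`
  obtain ⟨k, hk⟩ := (even_walkWeight_iff F p).mpr (hbip.even_length p (hXA hx) haA)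
  have := hF.distF_le_walkWeight_add_one hp h
  have := distF_nonneg_of_mem_Cset hb hx
  omega

theorem notMem_Cset_of_mem_minJoin (hbip : IsBipartitionOn G Set.univ A B)
    (hF : IsMinJoin G T F) (hXA : X ⊆ A) (hX : MaxBipExtreme G F A B X) {F' : Set (Sym2 V)}
    (hF' : IsMinJoin G T F') {e : Sym2 V} (he : e ∈ F') {v : V} (hv : v ∈ e) :
    v ∉ Cset G F Set.univ X := by
  intro hvC
  obtain ⟨a, rfl⟩ := Sym2.mem_iff_exists.mp hv
  have ha := mem_of_adj_of_mem_Cset hbip hF hXA hX hvC (G.mem_edgeSet.mp (hF'.1.1 he)).symm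
  have := hF.distF_le_neg_one hF' (Sym2.eq_swap ▸ he)
  have := distF_nonneg_of_mem_Cset hvC ha
  omega

end ExtremeSets

section Deletion

variable {G : SimpleGraph V} {S T : Set V} {F J : Set (Sym2 V)}

theorem mem_edgeSet_gDelete {e : Sym2 V} :
    e ∈ (gDelete G S).edgeSet ↔ e ∈ G.edgeSet ∧ ∀ v ∈ e, v ∉ S := by
  induction e using Sym2.ind with
  | _ u w =>
    exact ⟨fun ⟨h, hu, hw⟩ => ⟨h, by simp [hu, hw]⟩,
      fun ⟨h, hS⟩ => ⟨h, by simp_all⟩⟩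

theorem isJoin_gDelete_iff (hST : Disjoint S T) :
    IsJoin (gDelete G S) (T \ S) J ↔ IsJoin G T J ∧ ∀ e ∈ J, ∀ v ∈ e, v ∉ S := by
  have hdeg (hJ : ∀ e ∈ J, ∀ v ∈ e, v ∉ S) (v : V) :
      (v ∈ T \ S ↔ Odd (edgeDegree J v)) ↔ (v ∈ T ↔ Odd (edgeDegree J v)) := by
    by_cases hv : v ∈ S
    · have : edgeDegree J v = 0 := by
        rw [edgeDegree, Set.eq_empty_of_forall_notMem (s := {e ∈ J | v ∈ e})
          fun e he => hJ e he.1 v he.2 hv, Set.ncard_empty]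
      simp [hv, this, hST.notMem_of_mem_left hv]
    · simp [hv]
  simp only [IsJoin, Set.subset_def, mem_edgeSet_gDelete]
  constructor
  · rintro ⟨hsub, hpar⟩
    have hJ e he := (hsub e he).2
    exact ⟨⟨fun e he => (hsub e he).1, fun v => (hdeg hJ v).mp (hpar v)⟩, hJ⟩
  · rintro ⟨⟨hsub, hpar⟩, hJ⟩
    exact ⟨fun e he => ⟨hsub e he, hJ e he⟩, fun v => (hdeg hJ v).mpr (hpar v)⟩

theorem isMinJoin_gDelete_iff (hF : IsMinJoin G T F)
    (havoid : ∀ J, IsMinJoin G T J → ∀ e ∈ J, ∀ v ∈ e, v ∉ S) :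
    IsMinJoin (gDelete G S) (T \ S) J ↔ IsMinJoin G T J := by
  have hST : Disjoint S T := Set.disjoint_right.mpr fun v hv => by
    obtain ⟨e, he, hve⟩ := hF.1.exists_mem_of_mem hv
    exact havoid F hF e he v hve
  have hFS := (isJoin_gDelete_iff hST).mpr ⟨hF.1, havoid F hF⟩
  constructor
  · intro hJ
    exact ⟨((isJoin_gDelete_iff hST).mp hJ.1).1, fun K hK => (hJ.2 F hFS).trans (hF.2 K hK)⟩
  · intro hJ
    exact ⟨(isJoin_gDelete_iff hST).mpr ⟨hJ.1, havoid J hJ⟩,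
      fun K hK => hJ.2 K ((isJoin_gDelete_iff hST).mp hK).1⟩

end Deletion

theorem stmt_7_general [Fintype V] (G : SimpleGraph V) (T A B X C' : Set V) (F : Set (Sym2 V))
    (hbip : IsBipartitionOn G Set.univ A B)
    (hF : IsMinJoin G T F) (hXA : X ⊆ A) (hX : MaxBipExtreme G F A B X)
    (hC' : C' ⊆ Cset G F Set.univ X) :
    ∀ F' : Set (Sym2 V), IsMinJoin (gDelete G C') (T \ C') F' ↔ IsMinJoin G T F' :=
  fun _ => isMinJoin_gDelete_iff hF fun _ hJ _ he _ hv hvC' =>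
    notMem_Cset_of_mem_minJoin hbip hF hXA hX hJ he hv (hC' hvC')

/-- for `C' ⊆ C_X`, with `G' = G − C'` and `T' = T ∖ C'`, a set of edges is
a minimum join of `(G', T')` iff it is a minimum join of `(G, T)`. -/
theorem stmt_7 [Fintype V] (G : SimpleGraph V) (T A B X C' : Set V) (F : Set (Sym2 V))
    (hGT : IsGraft G T) (hbip : IsBipartitionOn G Set.univ A B)
    (hF : IsMinJoin G T F) (hXA : X ⊆ A) (hX : MaxBipExtreme G F A B X)
    (hC' : C' ⊆ Cset G F Set.univ X) :
    ∀ F' : Set (Sym2 V), IsMinJoin (gDelete G C') (T \ C') F' ↔ IsMinJoin G T F' :=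
  stmt_7_general G T A B X C' F hbip hF hXA hX hC'
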